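/- Let t(i,j) = C(i,j) (Pascal's triangle) and let h be the tetrahedron built from t. Then for all 0 ≤ k ≤ i and 0 ≤ j ≤ i-k, h(i,j,k) = Σ_{ℓ=0}^{k} C(2ℓ+i-k, ℓ+j) · C(k,ℓ). -/

import Mathlib

/-! Writing `i = m + k`, both sides obey the same recursion in `k`: on the right, Pascal's rule
in the upper index `2ℓ + m + 1` merges the last two terms of the recursion for `HP`, and Pascal's
rule for `C(k + 1, ℓ)` (`Finset.sum_choose_succ_mul`) splits the sum for `k + 1` accordingly. -/

/-- The tetrahedron built from Pascal's triangle. -/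
def HP : ℕ → ℕ → ℕ → ℕ
  | i, j, 0 => i.choose j
  | i, j, k + 1 => HP (i - 1) j k + HP i j k + HP i (j + 1) k

theorem HP_add_eq_sum (m j k : ℕ) :
    HP (m + k) j k = ∑ ℓ ∈ Finset.range (k + 1), (2 * ℓ + m).choose (ℓ + j) * k.choose ℓ := by
  induction k generalizing m j with
  | zero => simp [HP]
  | succ k ih =>
    have pascal (ℓ : ℕ) : (2 * ℓ + (m + 1)).choose (ℓ + j) + (2 * ℓ + (m + 1)).choose (ℓ + (j + 1))
        = (2 * (ℓ + 1) + m).choose (ℓ + 1 + j) := by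
      rw [show 2 * (ℓ + 1) + m = 2 * ℓ + (m + 1) + 1 by ring, show ℓ + 1 + j = ℓ + j + 1 by ring,
        Nat.choose_succ_succ]
      rfl
    calc HP (m + (k + 1)) j (k + 1)
        = HP (m + k) j k + (HP (m + 1 + k) j k + HP (m + 1 + k) (j + 1) k) := by
          rw [HP, add_assoc, show m + (k + 1) - 1 = m + k by omega, ← add_assoc m, add_right_comm]
      _ = ∑ ℓ ∈ Finset.range (k + 1), (2 * ℓ + m).choose (ℓ + j) * k.choose ℓ
            + ∑ ℓ ∈ Finset.range (k + 1), (2 * (ℓ + 1) + m).choose (ℓ + 1 + j) * k.choose ℓ := by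
          simp only [ih, ← Finset.sum_add_distrib, ← add_mul, pascal]
      _ = _ := by
          simpa only [Nat.cast_id, mul_comm] using (Finset.sum_choose_succ_mul (R := ℕ)
            (fun ℓ _ => (2 * ℓ + m).choose (ℓ + j)) k).symm

theorem stmt_10_general (i j k : ℕ) (hk : k ≤ i) :
    HP i j k = ∑ ℓ ∈ Finset.range (k + 1), (2 * ℓ + i - k).choose (ℓ + j) * k.choose ℓ := by
  obtain ⟨m, rfl⟩ := Nat.exists_eq_add_of_le' hk
  rw [HP_add_eq_sum]
  refine Finset.sum_congr rfl fun ℓ _ => ?_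
  rw [← add_assoc, Nat.add_sub_cancel]

theorem stmt_10 (i j k : ℕ) (hk : k ≤ i) (hj : j ≤ i - k) :
    HP i j k = ∑ ℓ ∈ Finset.range (k + 1), (2 * ℓ + i - k).choose (ℓ + j) * k.choose ℓ :=
  stmt_10_general i j k hk
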